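/- arXiv:2306.14363 — 2 statements merged into one kernel-verified Lean document; each statement's English description precedes it below -/
import Mathlib

section
/- Let c ≠ 0 and let g : I → ℝ solve g̈(s)/(1 + ġ(s)²) = −c on an interval I. Then there exist constants k₁, a₁ with g(s) = (1/c)·log(cos(c s − k₁)) + a₁ on any subinterval where cos(c s − k₁) > 0 and arctan(ġ(s)) = −(c s − k₁). -/
open Real Set

/-!
Along a solution, `d/ds arctan ġ = g̈ / (1 + ġ²) = -c`, so `arctan ġ(s) = -(c s - k₁)` for a
constant `k₁`. Hence `ġ(s) = -tan (c s - k₁)`, which is also the derivative of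
`(1/c) log (cos (c s - k₁))`; the cosine is positive because it equals `cos (arctan ġ(s))`.
-/

theorem IsOpen.exists_eq_const_of_hasDerivAt_zero {I : Set ℝ} (hI : IsOpen I)
    (hIc : IsPreconnected I) {F : ℝ → ℝ} (hF : ∀ s ∈ I, HasDerivAt F 0 s) :
    ∃ a, ∀ s ∈ I, F s = a :=
  hI.exists_is_const_of_deriv_eq_zero hIc
    (fun s hs => (hF s hs).differentiableAt.differentiableWithinAt) fun s hs => (hF s hs).deriv

theorem hasDerivAt_arctan_add_mul {f : ℝ → ℝ} {f' c s : ℝ} (hf : HasDerivAt f f' s)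
    (h : f' / (1 + f s ^ 2) = -c) : HasDerivAt (fun t => arctan (f t) + c * t) 0 s := by
  have hpos : 0 < 1 + f s ^ 2 := by positivity
  refine (((hasDerivAt_arctan (f s)).comp s hf).fun_add
    ((hasDerivAt_id s).const_mul c)).congr_deriv ?_
  field_simp at h ⊢
  linarith

theorem exists_arctan_eq_neg_mul_sub {I : Set ℝ} (hI : IsOpen I) (hIc : IsPreconnected I)
    {f f' : ℝ → ℝ} {c : ℝ} (hf : ∀ s ∈ I, HasDerivAt f (f' s) s)
    (h : ∀ s ∈ I, f' s / (1 + f s ^ 2) = -c) :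
    ∃ k, ∀ s ∈ I, arctan (f s) = -(c * s - k) := by
  obtain ⟨k, hk⟩ := hI.exists_eq_const_of_hasDerivAt_zero hIc
    fun s hs => hasDerivAt_arctan_add_mul (hf s hs) (h s hs)
  exact ⟨k, fun s hs => by linarith [hk s hs]⟩

theorem eq_neg_tan_of_arctan_eq_neg {x y : ℝ} (h : arctan y = -x) : y = -tan x := by
  rw [← tan_arctan y, h, tan_neg]

theorem cos_pos_of_arctan_eq_neg {x y : ℝ} (h : arctan y = -x) : 0 < cos x := by
  rw [← cos_neg, ← h]
  exact cos_arctan_pos y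

theorem hasDerivAt_one_div_mul_log_cos {c k s : ℝ} (hc : c ≠ 0) (hcos : 0 < cos (c * s - k)) :
    HasDerivAt (fun t => 1 / c * log (cos (c * t - k))) (-tan (c * s - k)) s := by
  have hlin : HasDerivAt (fun t => c * t - k) c s := by
    simpa using ((hasDerivAt_id s).const_mul c).sub_const k
  refine ((((hasDerivAt_cos _).comp s hlin).log hcos.ne').const_mul (1 / c)).congr_deriv ?_
  rw [tan_eq_sin_div_cos, Function.comp_apply]
  field_simp

/-- Solving `g̈/(1+ġ²) = −c` yields the Scherk profile
`g(s) = (1/c) log(cos(c s − k₁)) + a₁`. -/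
theorem stmt_4 (c : ℝ) (hc : c ≠ 0) (I : Set ℝ) (hI : IsOpen I) (hIconn : I.OrdConnected)
    (g : ℝ → ℝ) (hg : ContDiffOn ℝ 2 g I)
    (hode : ∀ s ∈ I, deriv (deriv g) s / (1 + (deriv g s) ^ 2) = -c) :
    ∃ k₁ a₁ : ℝ, ∀ s ∈ I,
      Real.cos (c * s - k₁) > 0 → Real.arctan (deriv g s) = -(c * s - k₁) →
        g s = (1 / c) * Real.log (Real.cos (c * s - k₁)) + a₁ := by
  have hIc : IsPreconnected I := hIconn.isPreconnected
  have hg' : ∀ s ∈ I, HasDerivAt g (deriv g s) s := fun s hs =>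
    ((hg.differentiableOn two_ne_zero).differentiableAt (hI.mem_nhds hs)).hasDerivAt
  have hg'' : ∀ s ∈ I, HasDerivAt (deriv g) (deriv (deriv g) s) s := fun s hs =>
    ((hg.deriv_of_isOpen (m := 1) hI (by norm_num)).differentiableOn one_ne_zero
      |>.differentiableAt (hI.mem_nhds hs)).hasDerivAt
  obtain ⟨k₁, hk₁⟩ := exists_arctan_eq_neg_mul_sub hI hIc hg'' hode
  obtain ⟨a₁, ha₁⟩ := hI.exists_eq_const_of_hasDerivAt_zero hIc
    (F := fun t => g t - 1 / c * log (cos (c * t - k₁))) fun s hs => by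
      have hderiv := eq_neg_tan_of_arctan_eq_neg (hk₁ s hs)
      simpa [hderiv] using (hg' s hs).fun_sub
        (hasDerivAt_one_div_mul_log_cos hc (cos_pos_of_arctan_eq_neg (hk₁ s hs)))
  exact ⟨k₁, a₁, fun s hs _ _ => by linarith [ha₁ s hs]⟩
end

section
/- Let ρ(s,t,·) be the density of the Gaussian N(0, Σ(s,t)) on ℝⁿ with Σ(s,t) positive definite and C¹ in s, and let v_s(s,t,x) = A_s(s,t)·x for a matrix A_s(s,t). Then the continuity equation ∂_s ρ + ∇·(ρ v_s) = 0 holds for all x if and only if the Lyapunov equation ∂_s Σ = A_s Σ + Σ A_sᵀ holds. -/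
open Real Matrix

/-- Density of the centered Gaussian with covariance `S` on `ℝⁿ`. -/
noncomputable def gaussDensity {n : ℕ} (S : Matrix (Fin n) (Fin n) ℝ) (x : Fin n → ℝ) : ℝ :=
  ((2 * Real.pi) ^ n * S.det) ^ (-(1:ℝ)/2) * Real.exp (-(1/2) * (x ⬝ᵥ S⁻¹ *ᵥ x))

/-!
Write `Σ = Sig s₀`, `y = Σ⁻¹ x` and `L = Σ' - (A Σ + Σ Aᵀ)`. Jacobi's formula
`(det Σ)' = det Σ · tr (Σ⁻¹ Σ')` and `(Σ⁻¹)' = -Σ⁻¹ Σ' Σ⁻¹` give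
`∂ₛρ = -½ ρ (tr (Σ⁻¹ Σ') - yᵀ Σ' y)`, while `∂ᵢρ = -ρ yᵢ` gives `∇·(ρ A x) = ρ (tr A - y · A x)`.
Since `yᵀ A Σ y = yᵀ Σ Aᵀ y = y · A x` and `tr (Σ⁻¹ A Σ) = tr (Σ⁻¹ Σ Aᵀ) = tr A`, the two add up to
`½ ρ (yᵀ L y - tr (Σ⁻¹ L))`. As `ρ > 0` and `y` ranges over all of `ℝⁿ`, the continuity equation
says that the quadratic form of the symmetric matrix `L` is constant, i.e. that `L = 0`.
-/

theorem Matrix.sum_det_updateRow {R ι : Type*} [CommRing R] [Fintype ι] [DecidableEq ι]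
    (A B : Matrix ι ι R) :
    ∑ i, (A.updateRow i (B i)).det = (A.adjugate * B).trace := by
  simp_rw [← cramer_transpose_apply, cramer_eq_adjugate_mulVec, ← adjugate_transpose]
  simp only [trace, diag, mul_apply, mulVec, dotProduct, transpose_apply]
  rw [Finset.sum_comm]

section MatrixCalculus

variable {𝕜 ι κ : Type*} [NontriviallyNormedField 𝕜] {t : 𝕜}

theorem HasDerivAt.dotProduct [Fintype ι] {a b : 𝕜 → ι → 𝕜} {a' b' : ι → 𝕜}
    (ha : HasDerivAt a a' t) (hb : HasDerivAt b b' t) :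
    HasDerivAt (fun u => a u ⬝ᵥ b u) (a' ⬝ᵥ b t + a t ⬝ᵥ b') t := by
  have h := HasDerivAt.fun_sum fun i (_ : i ∈ Finset.univ) =>
    (hasDerivAt_pi.1 ha i).fun_mul (hasDerivAt_pi.1 hb i)
  rw [Finset.sum_add_distrib] at h
  exact h

theorem HasDerivAt.mulVec [Fintype ι] {M : 𝕜 → Matrix κ ι 𝕜} {M' : Matrix κ ι 𝕜}
    {v : 𝕜 → ι → 𝕜} {v' : ι → 𝕜} (hM : ∀ i j, HasDerivAt (fun u => M u i j) (M' i j) t)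
    (hv : HasDerivAt v v' t) :
    HasDerivAt (fun u => M u *ᵥ v u) (M' *ᵥ v t + M t *ᵥ v') t :=
  hasDerivAt_pi.2 fun i => (hasDerivAt_pi.2 fun j => hM i j).dotProduct hv

theorem Matrix.IsSymm.of_hasDerivAt {M : 𝕜 → Matrix ι ι 𝕜} {M' : Matrix ι ι 𝕜}
    (hsymm : ∀ u, (M u).IsSymm) (hM : ∀ i j, HasDerivAt (fun u => M u i j) (M' i j) t) :
    M'.IsSymm :=
  IsSymm.ext fun i j => (hM j i).unique <| by simpa only [(hsymm _).apply] using hM i j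

variable [Fintype ι] [DecidableEq ι]

theorem Matrix.hasDerivAt_det {M : 𝕜 → Matrix ι ι 𝕜} {M' : Matrix ι ι 𝕜}
    (hM : ∀ i j, HasDerivAt (fun u => M u i j) (M' i j) t) :
    HasDerivAt (fun u => (M u).det) ((M t).adjugate * M').trace t := by
  let detCont : ContinuousMultilinearMap 𝕜 (fun _ : ι => ι → 𝕜) 𝕜 :=
    { toMultilinearMap := (detRowAlternating : (ι → 𝕜) [⋀^ι]→ₗ[𝕜] 𝕜).toMultilinearMap
      cont := continuous_id.matrix_det }
  have hrows : HasDerivAt (fun u => of.symm (M u)) (of.symm M') t :=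
    hasDerivAt_pi.2 fun i => hasDerivAt_pi.2 fun j => hM i j
  have h := (detCont.hasFDerivAt (of.symm (M t))).comp_hasDerivAt t hrows
  rw [← sum_det_updateRow]
  refine h.congr_deriv ?_
  rw [ContinuousMultilinearMap.linearDeriv_apply]
  rfl

/- In the `L∞`-operator norm, matrices form a complete normed algebra, where `Ring.inverse` has
derivative `h ↦ -M⁻¹ h M⁻¹`. Completeness has to be stated for the uniformity of this norm, which is
not syntactically the product uniformity carried by `Matrix`. -/
attribute [local instance] Matrix.linftyOpNormedRing Matrix.linftyOpNormedAlgebra in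
theorem Matrix.hasDerivAt_inv [CompleteSpace 𝕜] {M : 𝕜 → Matrix ι ι 𝕜} {M' : Matrix ι ι 𝕜}
    (hM : ∀ i j, HasDerivAt (fun u => M u i j) (M' i j) t) (ht : IsUnit (M t).det) (i j : ι) :
    HasDerivAt (fun u => (M u)⁻¹ i j) (-((M t)⁻¹ * M' * (M t)⁻¹) i j) t := by
  have hMat := HasDerivAt.fun_sum fun i (_ : i ∈ Finset.univ) => HasDerivAt.fun_sum
    fun j (_ : j ∈ Finset.univ) => (hM i j).smul_const (single i j (1 : 𝕜))
  simp only [smul_single, smul_eq_mul, mul_one, ← matrix_eq_sum_single] at hMat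
  have : @CompleteSpace (Matrix ι ι 𝕜) PseudoMetricSpace.toUniformSpace :=
    FiniteDimensional.complete 𝕜 _
  obtain ⟨U, hU⟩ := (isUnit_iff_isUnit_det _).2 ht
  have hinv := (hasFDerivAt_ringInverse (𝕜 := 𝕜) U).comp_hasDerivAt_of_eq t hMat hU
  have hentry :=
    ((entryLinearMap 𝕜 𝕜 i j).toContinuousLinearMap.hasFDerivAt).comp_hasDerivAt t hinv
  simp only [nonsing_inv_eq_ringInverse, ← hU, Ring.inverse_unit]
  exact hentry

end MatrixCalculus

theorem Matrix.IsSymm.eq_zero_of_forall_dotProduct_mulVec_self_eq {R ι : Type*} [Field R]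
    [NeZero (2 : R)] [Fintype ι] [DecidableEq ι] {L : Matrix ι ι R} {c : R} (hL : L.IsSymm)
    (h : ∀ y, y ⬝ᵥ L *ᵥ y = c) : L = 0 := by
  have hc : c = 0 := by simpa using (h 0).symm
  have hB : L.toBilin' = 0 :=
    LinearMap.BilinForm.ext_of_isSymm (isSymm_toBilin'_iff_isSymm.2 hL)
      LinearMap.BilinForm.isSymm_zero fun y => by simpa [toBilin'_apply', hc] using h y
  simpa using hB

theorem gaussDensity_pos {n : ℕ} {S : Matrix (Fin n) (Fin n) ℝ} (hS : 0 < S.det) (x : Fin n → ℝ) :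
    0 < gaussDensity S x :=
  mul_pos (rpow_pos_of_pos (mul_pos (pow_pos two_pi_pos n) hS) _) (exp_pos _)

theorem hasDerivAt_gaussDensity_cov {n : ℕ} {Sig : ℝ → Matrix (Fin n) (Fin n) ℝ}
    {Sig' : Matrix (Fin n) (Fin n) ℝ} {s₀ : ℝ} (hS : (Sig s₀).PosDef)
    (hSig' : ∀ i j, HasDerivAt (fun u => Sig u i j) (Sig' i j) s₀) (x : Fin n → ℝ) :
    HasDerivAt (fun u => gaussDensity (Sig u) x)
      (-(1 / 2) * gaussDensity (Sig s₀) x *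
        (((Sig s₀)⁻¹ * Sig').trace - ((Sig s₀)⁻¹ *ᵥ x) ⬝ᵥ Sig' *ᵥ ((Sig s₀)⁻¹ *ᵥ x))) s₀ := by
  have hdetS : 0 < (Sig s₀).det := hS.det_pos
  have hdet : HasDerivAt (fun u => (Sig u).det)
      ((Sig s₀).det * ((Sig s₀)⁻¹ * Sig').trace) s₀ := by
    have hadj : (Sig s₀).adjugate = (Sig s₀).det • (Sig s₀)⁻¹ := by
      rw [inv_def, Ring.inverse_eq_inv', smul_smul, mul_inv_cancel₀ hdetS.ne', one_smul]
    simpa only [hadj, smul_mul, trace_smul, smul_eq_mul] using hasDerivAt_det hSig'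
  have hnorm : HasDerivAt (fun u => ((2 * π) ^ n * (Sig u).det) ^ (-(1:ℝ)/2))
      (-(1 / 2) * ((2 * π) ^ n * (Sig s₀).det) ^ (-(1:ℝ)/2) * ((Sig s₀)⁻¹ * Sig').trace) s₀ := by
    have hpos : 0 < (2 * π) ^ n * (Sig s₀).det := mul_pos (pow_pos two_pi_pos n) hdetS
    refine ((hdet.const_mul _).rpow_const (Or.inl hpos.ne')).congr_deriv ?_
    rw [rpow_sub_one hpos.ne']
    field_simp
  have hquad : HasDerivAt (fun u => x ⬝ᵥ (Sig u)⁻¹ *ᵥ x)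
      (-(((Sig s₀)⁻¹ *ᵥ x) ⬝ᵥ Sig' *ᵥ ((Sig s₀)⁻¹ *ᵥ x))) s₀ := by
    have h := (hasDerivAt_const s₀ x).dotProduct
      (HasDerivAt.mulVec (M' := -((Sig s₀)⁻¹ * Sig' * (Sig s₀)⁻¹))
        (hasDerivAt_inv hSig' hdetS.ne'.isUnit) (hasDerivAt_const s₀ x))
    refine h.congr_deriv ?_
    have hsymm : ((Sig s₀)⁻¹)ᵀ = (Sig s₀)⁻¹ := (isHermitian_iff_isSymm.1 hS.isHermitian).inv
    rw [zero_dotProduct, mulVec_zero, zero_add, add_zero, neg_mulVec, dotProduct_neg,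
      ← mulVec_mulVec, ← mulVec_mulVec, dotProduct_mulVec, ← mulVec_transpose, hsymm]
  refine (hnorm.fun_mul (hquad.const_mul (-(1 / 2))).exp).congr_deriv ?_
  simp only [gaussDensity]
  ring

theorem hasDerivAt_gaussDensity_update {n : ℕ} {S : Matrix (Fin n) (Fin n) ℝ} (hS : S.IsSymm)
    (x : Fin n → ℝ) (i : Fin n) :
    HasDerivAt (fun u => gaussDensity S (Function.update x i u))
      (-(gaussDensity S x * (S⁻¹ *ᵥ x) i)) (x i) := by
  have hline := hasDerivAt_update x i (x i)
  have hquad : HasDerivAt (fun u => Function.update x i u ⬝ᵥ S⁻¹ *ᵥ Function.update x i u)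
      (2 * (S⁻¹ *ᵥ x) i) (x i) := by
    have h := hline.dotProduct
      (HasDerivAt.mulVec (M := fun _ => S⁻¹) (M' := 0) (fun _ _ => hasDerivAt_const _ _) hline)
    refine h.congr_deriv ?_
    rw [Function.update_eq_self, zero_mulVec, zero_add, single_one_dotProduct, dotProduct_mulVec,
      dotProduct_single_one, ← mulVec_transpose, hS.inv.eq]
    ring
  refine ((hquad.const_mul (-(1 / 2))).exp.const_mul _).congr_deriv ?_
  simp only [gaussDensity, Function.update_eq_self]
  ring

theorem hasDerivAt_gaussDensity_mul_mulVec_update {n : ℕ} {S : Matrix (Fin n) (Fin n) ℝ}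
    (hS : S.IsSymm) (A : Matrix (Fin n) (Fin n) ℝ) (x : Fin n → ℝ) (i : Fin n) :
    HasDerivAt (fun u => gaussDensity S (Function.update x i u) * (A *ᵥ Function.update x i u) i)
      (gaussDensity S x * (A i i - (S⁻¹ *ᵥ x) i * (A *ᵥ x) i)) (x i) := by
  have hline := hasDerivAt_update x i (x i)
  have hvel : HasDerivAt (fun u => (A *ᵥ Function.update x i u) i) (A i i) (x i) := by
    have h := hasDerivAt_pi.1
      (HasDerivAt.mulVec (M := fun _ => A) (M' := 0) (fun _ _ => hasDerivAt_const _ _) hline) i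
    refine h.congr_deriv ?_
    rw [Function.update_eq_self, zero_mulVec, zero_add, mulVec_single_one, col_apply]
  refine ((hasDerivAt_gaussDensity_update hS x i).fun_mul hvel).congr_deriv ?_
  rw [Function.update_eq_self]
  ring

theorem sum_deriv_gaussDensity_mul_mulVec_update {n : ℕ} {S : Matrix (Fin n) (Fin n) ℝ}
    (hS : S.IsSymm) (A : Matrix (Fin n) (Fin n) ℝ) (x : Fin n → ℝ) :
    ∑ i, deriv (fun u => gaussDensity S (Function.update x i u) * (A *ᵥ Function.update x i u) i)
      (x i) = gaussDensity S x * (A.trace - (S⁻¹ *ᵥ x) ⬝ᵥ A *ᵥ x) := by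
  simp only [(hasDerivAt_gaussDensity_mul_mulVec_update hS A x _).deriv, ← Finset.mul_sum,
    Finset.sum_sub_distrib]
  rfl

theorem continuity_residual_eq {n : ℕ} {Sig : ℝ → Matrix (Fin n) (Fin n) ℝ}
    {Sig' : Matrix (Fin n) (Fin n) ℝ} {s₀ : ℝ} (hS : (Sig s₀).PosDef)
    (hSig' : ∀ i j, HasDerivAt (fun u => Sig u i j) (Sig' i j) s₀)
    (A : Matrix (Fin n) (Fin n) ℝ) (x : Fin n → ℝ) :
    deriv (fun u => gaussDensity (Sig u) x) s₀ +
        ∑ i, deriv (fun u => gaussDensity (Sig s₀) (Function.update x i u) *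
          (A *ᵥ Function.update x i u) i) (x i) =
      gaussDensity (Sig s₀) x / 2 *
        (((Sig s₀)⁻¹ *ᵥ x) ⬝ᵥ (Sig' - (A * Sig s₀ + Sig s₀ * Aᵀ)) *ᵥ ((Sig s₀)⁻¹ *ᵥ x) -
          ((Sig s₀)⁻¹ * (Sig' - (A * Sig s₀ + Sig s₀ * Aᵀ))).trace) := by
  have hSymm : (Sig s₀).IsSymm := isHermitian_iff_isSymm.1 hS.isHermitian
  have hunit : IsUnit (Sig s₀).det := hS.det_pos.ne'.isUnit
  set y := (Sig s₀)⁻¹ *ᵥ x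
  have hSy : Sig s₀ *ᵥ y = x := by
    rw [mulVec_mulVec, mul_nonsing_inv _ hunit, one_mulVec]
  have hquad : y ⬝ᵥ (Sig' - (A * Sig s₀ + Sig s₀ * Aᵀ)) *ᵥ y =
      y ⬝ᵥ Sig' *ᵥ y - 2 * (y ⬝ᵥ A *ᵥ x) := by
    have hsym : y ⬝ᵥ (Sig s₀ * Aᵀ) *ᵥ y = y ⬝ᵥ A *ᵥ x := by
      rw [← mulVec_mulVec, dotProduct_mulVec, ← mulVec_transpose, hSymm.eq, hSy,
        dotProduct_mulVec, vecMul_transpose, dotProduct_comm]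
    rw [sub_mulVec, add_mulVec, dotProduct_sub, dotProduct_add, hsym, ← mulVec_mulVec, hSy]
    ring
  have htrace : ((Sig s₀)⁻¹ * (Sig' - (A * Sig s₀ + Sig s₀ * Aᵀ))).trace =
      ((Sig s₀)⁻¹ * Sig').trace - 2 * A.trace := by
    rw [mul_sub, mul_add, trace_sub, trace_add, trace_mul_comm _ (A * Sig s₀), Matrix.mul_assoc,
      mul_nonsing_inv _ hunit, Matrix.mul_one, ← Matrix.mul_assoc, nonsing_inv_mul _ hunit,
      Matrix.one_mul, trace_transpose]
    ring
  rw [(hasDerivAt_gaussDensity_cov hS hSig' x).deriv,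
    sum_deriv_gaussDensity_mul_mulVec_update hSymm, hquad, htrace]
  ring

/-- For a family of centered Gaussians `ρ(s,·) = N(0, Σ(s))` and the linear vector field
`v_s(x) = A x`, the continuity equation `∂_s ρ + ∇·(ρ v_s) = 0` holds for all `x` iff the
Lyapunov equation `∂_s Sig = A Sig + Sig Aᵀ` holds. -/
theorem stmt_9 {n : ℕ} (Sig : ℝ → Matrix (Fin n) (Fin n) ℝ)
    (Sig' : Matrix (Fin n) (Fin n) ℝ) (A : Matrix (Fin n) (Fin n) ℝ) (s₀ : ℝ)
    (hpd : ∀ u : ℝ, (Sig u).PosDef)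
    (hSig' : ∀ i j, HasDerivAt (fun u => Sig u i j) (Sig' i j) s₀) :
    (∀ x : Fin n → ℝ,
      deriv (fun u => gaussDensity (Sig u) x) s₀ +
        ∑ i, deriv
          (fun u => gaussDensity (Sig s₀) (Function.update x i u) *
            (A *ᵥ Function.update x i u) i) (x i) = 0)
      ↔ Sig' = A * Sig s₀ + Sig s₀ * Aᵀ := by
  have hS := hpd s₀
  have hSymm : ∀ u, (Sig u).IsSymm := fun u => isHermitian_iff_isSymm.1 (hpd u).isHermitian
  have hunit : IsUnit (Sig s₀).det := hS.det_pos.ne'.isUnit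
  have hsurj : Function.Surjective (Sig s₀)⁻¹.mulVec := fun y =>
    ⟨Sig s₀ *ᵥ y, by rw [mulVec_mulVec, nonsing_inv_mul _ hunit, one_mulVec]⟩
  simp only [continuity_residual_eq hS hSig', mul_eq_zero, div_eq_zero_iff,
    (gaussDensity_pos hS.det_pos _).ne', two_ne_zero, or_self, false_or, sub_eq_zero]
  rw [← sub_eq_zero (a := Sig')]
  set L := Sig' - (A * Sig s₀ + Sig s₀ * Aᵀ)
  have hL : L.IsSymm := (IsSymm.of_hasDerivAt hSymm hSig').sub
    (by simp [IsSymm, transpose_add, transpose_mul, (hSymm s₀).eq, add_comm])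
  rw [← hsurj.forall (p := fun y => y ⬝ᵥ L *ᵥ y = ((Sig s₀)⁻¹ * L).trace)]
  exact ⟨hL.eq_zero_of_forall_dotProduct_mulVec_self_eq, fun h y => by simp [h]⟩
end
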